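/- For integers ℓ ≥ 1 and k ≥ 2, the vertex set of the star ℓ-set transposition graph ST^ℓ_k is partitioned by the k sets S_i = {v : v 0 = i}, i ∈ Fin k: these sets are pairwise disjoint and their union is the whole vertex set, and each S_i is an efficient dominating ℓ-set of ST^ℓ_k. -/
import Mathlib


/-- An ℓ-set permutation: a string of length `k * l` over the alphabet `Fin k`
in which every symbol occurs exactly `l` times. -/
abbrev LSetPerm (k l : ℕ) : Type :=
  {v : Fin (k * l) → Fin k // ∀ j : Fin k, (Finset.univ.filter fun x => v x = j).card = l}

/-- The star ℓ-set transposition graph `ST^ℓ_k`: vertices are the ℓ-set permutations,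
with `v` adjacent to `w` iff `w` is obtained from `v` by transposing the first entry
with an entry of differing value. -/
def STGraph (k l : ℕ) [NeZero (k * l)] : SimpleGraph (LSetPerm k l) :=
  SimpleGraph.fromRel fun v w =>
    ∃ h : Fin (k * l), h ≠ 0 ∧ v.1 h ≠ v.1 0 ∧ w.1 = v.1 ∘ (Equiv.swap 0 h)

lemma comp_perm_count {n k : ℕ} (v : Fin n → Fin k) (e : Equiv.Perm (Fin n)) (j : Fin k) :
    (Finset.univ.filter fun x => (v ∘ e) x = j).card =
    (Finset.univ.filter fun x => v x = j).card := by
  apply Finset.card_bij' (fun x _ => e x) (fun x _ => e.symm x) <;> simp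

/-- the sets `S_i = {v : v 0 = i}`, `i ∈ Fin k`, are pairwise disjoint,
their union is the whole vertex set of `ST^ℓ_k`, and each is an efficient dominating
ℓ-set. -/
theorem ST_partition_into_efficientDominating_lSets (k l : ℕ) (hl : 1 ≤ l) (hk : 2 ≤ k) :
    letI : NeZero (k * l) := ⟨Nat.mul_ne_zero (by omega) (by omega)⟩
    (∀ i j : Fin k, i ≠ j →
      Disjoint {v : LSetPerm k l | v.1 0 = i} {v : LSetPerm k l | v.1 0 = j}) ∧
    (⋃ i : Fin k, {v : LSetPerm k l | v.1 0 = i}) = Set.univ ∧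
    (∀ i : Fin k, ∀ v : LSetPerm k l, v.1 0 ≠ i →
      {w : LSetPerm k l | (STGraph k l).Adj v w ∧ w.1 0 = i}.ncard = l) := by
  letI : NeZero (k * l) := ⟨Nat.mul_ne_zero (by omega) (by omega)⟩
  refine ⟨?_, ?_, ?_⟩
  · intro i j hij
    rw [Set.disjoint_left]
    intro v hvi hvj
    exact hij (hvi ▸ hvj ▸ rfl)
  · rw [Set.eq_univ_iff_forall]
    intro v
    exact Set.mem_iUnion.2 ⟨v.1 0, rfl⟩
  · intro i v hv
    set T : Finset (Fin (k * l)) := Finset.univ.filter (fun x => v.1 x = i) with hT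
    have hTcard : T.card = l := v.2 i
    set f : Fin (k * l) → LSetPerm k l := fun h =>
      ⟨v.1 ∘ Equiv.swap 0 h, fun j => by rw [comp_perm_count]; exact v.2 j⟩ with hf
    have hmemT : ∀ h, h ∈ T ↔ v.1 h = i := by
      intro h; simp [hT]
    have hne0 : ∀ h ∈ T, h ≠ 0 := by
      intro h hh h0
      exact hv (h0 ▸ (hmemT h).1 hh)
    have hseteq : {w : LSetPerm k l | (STGraph k l).Adj v w ∧ w.1 0 = i} = f '' ↑T := by
      ext w
      constructor
      · rintro ⟨hadj, hw0⟩
        rw [STGraph, SimpleGraph.fromRel_adj] at hadj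
        obtain ⟨hneq, hrel | hrel⟩ := hadj
        · obtain ⟨h, h0, _, heq⟩ := hrel
          have hvh : v.1 h = i := by
            have : w.1 0 = v.1 h := by rw [heq]; simp
            rw [← this, hw0]
          exact ⟨h, (hmemT h).2 hvh, Subtype.ext heq.symm⟩
        · obtain ⟨h, h0, _, heq⟩ := hrel
          have heq' : w.1 = v.1 ∘ Equiv.swap 0 h := by
            rw [heq]; funext x; simp
          have hvh : v.1 h = i := by
            have : w.1 0 = v.1 h := by rw [heq']; simp
            rw [← this, hw0]
          exact ⟨h, (hmemT h).2 hvh, Subtype.ext heq'.symm⟩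
      · rintro ⟨h, hh, rfl⟩
        have hh' := (hmemT h).1 (by simpa using hh)
        have h0 := hne0 h (by simpa using hh)
        have hfh0 : (f h).1 0 = i := by simp [hf, hh']
        refine ⟨?_, hfh0⟩
        rw [STGraph, SimpleGraph.fromRel_adj]
        refine ⟨?_, Or.inl ⟨h, h0, fun hc => hv (hc ▸ hh'), rfl⟩⟩
        intro hc
        exact hv (hc ▸ hfh0)
    rw [hseteq]
    rw [Set.ncard_image_of_injOn, Set.ncard_coe_finset, hTcard]
    intro h1 hh1 h2 hh2 heq
    by_contra hne
    have h1T : h1 ∈ T := by simpa using hh1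
    have h2T : h2 ∈ T := by simpa using hh2
    have h10 := hne0 h1 h1T
    have e1 : (f h1).1 h1 = v.1 0 := by simp [hf]
    have e2 : (f h2).1 h1 = v.1 h1 := by
      simp [hf, Equiv.swap_apply_of_ne_of_ne h10 hne]
    rw [heq, e2, (hmemT h1).1 h1T] at e1
    exact hv e1.symm
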